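/- Let N ≥ 2 and M ≥ 2 be integers, ω a nonzero real number, c : Fin N → ((Fin N → ℕ) → ℂ) complex coefficients, z₀ : Fin N → ℂ, and K ∈ ℂ such that for every n, K·z₀(n) = (1 − M)·∑_{m : Fin N → ℕ, ∑_k m(k) = M} c(n)(m)·∏_{k} z₀(k)^{m(k)}. Define w(n)(t) := z₀(n)·exp(iωt/(M − 1))·(1 + K·(exp(iωt) − 1)/(iω))^{1/(1 − M)}, using the principal complex power. Then for every real t such that 1 + K·(exp(iωt) − 1)/(iω) lies in the slit plane ℂ ∖ (−∞, 0], and every n, w(n) has derivative at t equal to (iω/(M − 1))·w(n)(t) + ∑_{m : Fin N → ℕ, ∑_k m(k) = M} c(n)(m)·∏_{k} w(k)(t)^{m(k)}. -/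

import Mathlib

/-!
Every `w n` is `z₀ n` times one scalar function `u`, which solves the Bernoulli equation
`u' = (a/(M-1)) u + (K/(1-M)) u^M` with `a = iω`. Since the nonlinearity is homogeneous of
degree `M`, it maps `z₀ u` to `u^M` times its value at `z₀`, which the constraint on `K`
turns into `(K/(1-M)) z₀ u^M`.
-/

open Finset Complex

/-- The finite set of multi-indices `m : Fin N → ℕ` with `∑ k, m k = M`. -/
def multiIdx (N M : ℕ) : Finset (Fin N → ℕ) :=
  (Fintype.piFinset fun _ : Fin N => Finset.range (M + 1)).filter fun m => ∑ k, m k = M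

theorem sum_multiIdx_mul_prod_mul_pow {R : Type*} [CommSemiring R] {N M : ℕ}
    (c : (Fin N → ℕ) → R) (z : Fin N → R) (u : R) :
    ∑ m ∈ multiIdx N M, c m * ∏ k, (z k * u) ^ m k =
      (∑ m ∈ multiIdx N M, c m * ∏ k, z k ^ m k) * u ^ M := by
  rw [Finset.sum_mul]
  refine Finset.sum_congr rfl fun m hm => ?_
  have hmM : ∑ k, m k = M := (Finset.mem_filter.mp hm).2
  simp only [mul_pow, Finset.prod_mul_distrib, Finset.prod_pow_eq_pow_sum, hmM, mul_assoc]

noncomputable def bernoulliSol (a K : ℂ) (M : ℕ) (s : ℂ) : ℂ :=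
  exp (a * s / ((M : ℂ) - 1)) * (1 + K * (exp (a * s) - 1) / a) ^ ((1 : ℂ) / (1 - (M : ℂ)))

section Bernoulli

variable {a K : ℂ} {M : ℕ}

theorem bernoulliSol_pow (hM : M ≠ 1) (s : ℂ) :
    bernoulliSol a K M s ^ M = exp (a * s / ((M : ℂ) - 1)) * exp (a * s) *
      (1 + K * (exp (a * s) - 1) / a) ^ ((1 : ℂ) / (1 - (M : ℂ)) - 1) := by
  have hM1 : (M : ℂ) - 1 ≠ 0 := sub_ne_zero.mpr (mod_cast hM)
  have h1M : 1 - (M : ℂ) ≠ 0 := sub_ne_zero.mpr (mod_cast hM.symm)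
  have hexp : exp (a * s / ((M : ℂ) - 1)) ^ M =
      exp (a * s / ((M : ℂ) - 1)) * exp (a * s) := by
    rw [← exp_nat_mul, ← exp_add]
    congr 1
    field_simp
    ring
  have hcpow : ∀ B : ℂ,
      (B ^ ((1 : ℂ) / (1 - (M : ℂ)))) ^ M = B ^ ((1 : ℂ) / (1 - (M : ℂ)) - 1) := by
    intro B
    rw [← cpow_nat_mul]
    congr 1
    field_simp
    ring
  rw [bernoulliSol, mul_pow, hexp, hcpow]

theorem hasDerivAt_bernoulliSol (ha : a ≠ 0) (hM : M ≠ 1) {s : ℂ}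
    (hs : 1 + K * (exp (a * s) - 1) / a ∈ slitPlane) :
    HasDerivAt (bernoulliSol a K M)
      (a / ((M : ℂ) - 1) * bernoulliSol a K M s + K / (1 - (M : ℂ)) * bernoulliSol a K M s ^ M)
      s := by
  have hlin : HasDerivAt (fun s : ℂ => a * s) a s := by
    simpa using (hasDerivAt_id s).const_mul a
  have hexp : HasDerivAt (fun s : ℂ => exp (a * s / ((M : ℂ) - 1)))
      (exp (a * s / ((M : ℂ) - 1)) * (a / ((M : ℂ) - 1))) s :=
    (hlin.div_const _).cexp
  have hbase : HasDerivAt (fun s : ℂ => 1 + K * (exp (a * s) - 1) / a)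
      (K * exp (a * s)) s := by
    refine ((((hlin.cexp.sub_const 1).const_mul K).div_const a).const_add 1).congr_deriv ?_
    field_simp
  refine (hexp.mul (hbase.cpow_const hs)).congr_deriv ?_
  rw [bernoulliSol_pow hM, bernoulliSol]
  ring

end Bernoulli

theorem statement4_general (N M : ℕ) (hM : 2 ≤ M)
    (ω : ℝ) (hω : ω ≠ 0)
    (c : Fin N → (Fin N → ℕ) → ℂ) (z₀ : Fin N → ℂ) (K : ℂ)
    (hK : ∀ n : Fin N,
      K * z₀ n = (1 - (M : ℂ)) * ∑ m ∈ multiIdx N M, c n m * ∏ k, z₀ k ^ m k)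
    (w : Fin N → ℝ → ℂ)
    (hw : ∀ (n : Fin N) (t : ℝ),
      w n t = z₀ n * Complex.exp (Complex.I * ω * t / ((M : ℂ) - 1)) *
        (1 + K * (Complex.exp (Complex.I * ω * t) - 1) / (Complex.I * ω)) ^
          ((1 : ℂ) / (1 - (M : ℂ))))
    (t : ℝ)
    (ht : 1 + K * (Complex.exp (Complex.I * ω * t) - 1) / (Complex.I * ω) ∈
      Complex.slitPlane)
    (n : Fin N) :
    HasDerivAt (w n)
      (Complex.I * ω / ((M : ℂ) - 1) * w n t +
        ∑ m ∈ multiIdx N M, c n m * ∏ k, w k t ^ m k) t := by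
  have hM1 : M ≠ 1 := by omega
  have h1M : 1 - (M : ℂ) ≠ 0 := sub_ne_zero.mpr (mod_cast hM1.symm)
  have ha : I * (ω : ℂ) ≠ 0 := mul_ne_zero I_ne_zero (ofReal_ne_zero.mpr hω)
  have hw_eq : w = fun k (s : ℝ) => z₀ k * bernoulliSol (I * ω) K M s := by
    funext k s
    rw [hw, bernoulliSol, mul_assoc]
  have hsum : ∑ m ∈ multiIdx N M, c n m * ∏ k, z₀ k ^ m k = K * z₀ n / (1 - (M : ℂ)) :=
    (eq_div_iff h1M).mpr (by rw [hK n, mul_comm])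
  subst hw_eq
  refine ((hasDerivAt_bernoulliSol ha hM1 ht).comp_ofReal.const_mul (z₀ n)).congr_deriv ?_
  rw [sum_multiIdx_mul_prod_mul_pow, hsum]
  ring

/-- The explicit functions
`w_n(t) = z_n(0) exp(iωt/(M-1)) (1 + K (exp(iωt) - 1)/(iω))^{1/(1-M)}`
(principal complex power) solve the modified autonomous system
`ẇ_n = (iω/(M-1)) w_n + ∑_m c_{n,m} ∏_k w_k^{m_k}` at every real time `t` for which
the base of the power lies in the slit plane, provided the algebraic constraints
`K z_n(0) = (1-M) ∑_m c_{n,m} ∏_k z_k(0)^{m_k}` hold. -/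
theorem statement4 (N M : ℕ) (hN : 2 ≤ N) (hM : 2 ≤ M)
    (ω : ℝ) (hω : ω ≠ 0)
    (c : Fin N → (Fin N → ℕ) → ℂ) (z₀ : Fin N → ℂ) (K : ℂ)
    (hK : ∀ n : Fin N,
      K * z₀ n = (1 - (M : ℂ)) * ∑ m ∈ multiIdx N M, c n m * ∏ k, z₀ k ^ m k)
    (w : Fin N → ℝ → ℂ)
    (hw : ∀ (n : Fin N) (t : ℝ),
      w n t = z₀ n * Complex.exp (Complex.I * ω * t / ((M : ℂ) - 1)) *
        (1 + K * (Complex.exp (Complex.I * ω * t) - 1) / (Complex.I * ω)) ^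
          ((1 : ℂ) / (1 - (M : ℂ))))
    (t : ℝ)
    (ht : 1 + K * (Complex.exp (Complex.I * ω * t) - 1) / (Complex.I * ω) ∈
      Complex.slitPlane)
    (n : Fin N) :
    HasDerivAt (w n)
      (Complex.I * ω / ((M : ℂ) - 1) * w n t +
        ∑ m ∈ multiIdx N M, c n m * ∏ k, w k t ^ m k) t :=
  statement4_general N M hM ω hω c z₀ K hK w hw t ht n
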